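/- arXiv:1601.01902 — 2 statements merged into one kernel-verified Lean document; each statement's English description precedes it below -/
import Mathlib

section
/- Let (𝔛_k) be a stationary centered sequence with Gordin decomposition 𝔛_k = θ_k − θ_{k+1} + (𝔐_{k+1} − 𝔐_k) as above, where 𝔐 is an L² martingale and (θ_k) is stationary in the sense that 𝔼[𝔛_j ⋆ (θ₀−θ₁)] = 𝔼[𝔛_{j+ℓ} ⋆ (θ_ℓ−θ_{ℓ+1})] for all j,ℓ ≥ 1 (for a fixed bounded bilinear operation ⋆), and suppose 𝔼[𝔛_N ⋆ θ_N] → 𝔼[𝔛₀ ⋆ θ₀] and the remainder 𝔼[𝔛_N ⋆ θ₀ − θ_{N+1} ⋆ (𝔐₁−𝔐₀)] → 0 as N → ∞. Then Σ_{j=1}^∞ 𝔼[𝔛_j ⋆ 𝔛₀] = −𝔼[𝔛₀ ⋆ θ₀] + 𝔼[θ₁ ⋆ (𝔐₁ − 𝔐₀)]. -/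
/-!
Split `𝔛₀ = (θ₀ - θ₁) + (𝔐₁ - 𝔐₀)` in `𝔼[𝔛_j ⋆ 𝔛₀]`. In the martingale part, the Gordin
decomposition of `𝔛_j` and the orthogonality `𝔼[(𝔐_{j+1} - 𝔐_j) ⋆ (𝔐₁ - 𝔐₀)] = 0` leave
`𝔼[θ_j ⋆ (𝔐₁ - 𝔐₀)] - 𝔼[θ_{j+1} ⋆ (𝔐₁ - 𝔐₀)]`, which telescopes. In the coboundary part,
stationarity moves `𝔼[𝔛_j ⋆ (θ₀ - θ₁)]` to `𝔼[𝔛_N ⋆ (θ_{N-j} - θ_{N-j+1})]`, so that for fixed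
`N` it also telescopes, to `𝔼[𝔛_N ⋆ θ₀] - 𝔼[𝔛_N ⋆ θ_N]`. The two asymptotic hypotheses then give
the limit of the partial sums.
-/

open MeasureTheory Finset Filter Topology

theorem Finset.sum_Icc_one_sub_succ {M : Type*} [AddCommGroup M] (f : ℕ → M) (N : ℕ) :
    ∑ j ∈ Icc 1 N, (f j - f (j + 1)) = f 1 - f (N + 1) := by
  induction N with
  | zero => simp
  | succ n ih => rw [sum_Icc_succ_top (by omega), ih]; abel

theorem Finset.sum_Icc_one_sub_reflect {M : Type*} [AddCommGroup M] (f : ℕ → M) (N : ℕ) :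
    ∑ j ∈ Icc 1 N, (f (N - j) - f (N - j + 1)) = f 0 - f N := by
  rw [← Ico_add_one_right_eq_Icc,
    sum_Ico_reflect (fun k => f k - f (k + 1)) 1 le_rfl,
    Nat.sub_self, Nat.add_sub_cancel, Nat.Ico_zero_eq_range, sum_range_sub']

section DriftSums

variable {M : Type*} [AddCommGroup M] {s c : ℕ → M} {a : ℕ → ℕ → M}

/-- `a j k` plays the role of `𝔼[𝔛_j ⋆ θ_k]` and `c j` that of `𝔼[θ_j ⋆ (𝔐₁ − 𝔐₀)]`. -/
theorem sum_Icc_eq_of_stationary_increments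
    (hs : ∀ j, 1 ≤ j → s j = a j 0 - a j 1 + (c j - c (j + 1)))
    (ha : ∀ j ℓ, 1 ≤ j → 1 ≤ ℓ → a j 0 - a j 1 = a (j + ℓ) ℓ - a (j + ℓ) (ℓ + 1)) (N : ℕ) :
    ∑ j ∈ Icc 1 N, s j = a N 0 - a N N + (c 1 - c (N + 1)) := by
  have hshift : ∀ j ∈ Icc 1 N, a j 0 - a j 1 = a N (N - j) - a N (N - j + 1) := by
    intro j hj
    obtain ⟨hj1, hjN⟩ := mem_Icc.mp hj
    rcases hjN.eq_or_lt with rfl | hlt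
    · simp
    · simpa [Nat.add_sub_cancel' hjN] using ha j (N - j) hj1 (by omega)
  rw [sum_congr rfl fun j hj => hs j (mem_Icc.mp hj).1, sum_add_distrib,
    sum_congr rfl hshift, sum_Icc_one_sub_reflect (a N),
    sum_Icc_one_sub_succ]

theorem tendsto_sum_Icc_of_stationary_increments [TopologicalSpace M] [IsTopologicalAddGroup M]
    {L : M} (hs : ∀ j, 1 ≤ j → s j = a j 0 - a j 1 + (c j - c (j + 1)))
    (ha : ∀ j ℓ, 1 ≤ j → 1 ≤ ℓ → a j 0 - a j 1 = a (j + ℓ) ℓ - a (j + ℓ) (ℓ + 1))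
    (hdiag : Tendsto (fun N => a N N) atTop (𝓝 L))
    (hrem : Tendsto (fun N => a N 0 - c (N + 1)) atTop (𝓝 0)) :
    Tendsto (fun N => ∑ j ∈ Icc 1 N, s j) atTop (𝓝 (-L + c 1)) := by
  have hlim := (hrem.sub hdiag).add (tendsto_const_nhds (x := c 1))
  rw [zero_sub] at hlim
  refine hlim.congr fun N => ?_
  rw [sum_Icc_eq_of_stationary_increments hs ha]
  abel

end DriftSums

theorem MeasureTheory.Integrable.of_ae_eq_add {Ω G : Type*} [MeasurableSpace Ω]
    {μ : Measure Ω} [NormedAddCommGroup G] {p q r : Ω → G} (h : p =ᵐ[μ] q + r)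
    (hp : Integrable p μ) (hq : Integrable q μ) : Integrable r μ :=
  (hp.sub hq).congr (by filter_upwards [h] with ω hω; simp [hω])

section Bilinear

variable {Ω E F G : Type*} [MeasurableSpace Ω] {μ : Measure Ω}
  [NormedAddCommGroup E] [NormedSpace ℝ E] [NormedAddCommGroup F] [NormedSpace ℝ F]
  [NormedAddCommGroup G] [NormedSpace ℝ G]

theorem MeasureTheory.Integrable.bilin_sub_right (B : E →L[ℝ] F →L[ℝ] G) {x : Ω → E} {y z : Ω → F}
    (hy : Integrable (fun ω => B (x ω) (y ω)) μ) (hz : Integrable (fun ω => B (x ω) (z ω)) μ) :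
    Integrable (fun ω => B (x ω) (y ω - z ω)) μ := by
  simpa only [map_sub] using hy.sub' hz

theorem integral_bilin_sub_right (B : E →L[ℝ] F →L[ℝ] G) {x : Ω → E} {y z : Ω → F}
    (hy : Integrable (fun ω => B (x ω) (y ω)) μ) (hz : Integrable (fun ω => B (x ω) (z ω)) μ) :
    ∫ ω, B (x ω) (y ω - z ω) ∂μ = ∫ ω, B (x ω) (y ω) ∂μ - ∫ ω, B (x ω) (z ω) ∂μ := by
  simpa only [map_sub] using integral_sub hy hz

theorem MeasureTheory.Integrable.bilin_sub_left (B : E →L[ℝ] F →L[ℝ] G) {x y : Ω → E} {z : Ω → F}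
    (hx : Integrable (fun ω => B (x ω) (z ω)) μ) (hy : Integrable (fun ω => B (y ω) (z ω)) μ) :
    Integrable (fun ω => B (x ω - y ω) (z ω)) μ := by
  simpa only [map_sub, sub_apply] using hx.sub' hy

theorem integral_bilin_sub_left (B : E →L[ℝ] F →L[ℝ] G) {x y : Ω → E} {z : Ω → F}
    (hx : Integrable (fun ω => B (x ω) (z ω)) μ) (hy : Integrable (fun ω => B (y ω) (z ω)) μ) :
    ∫ ω, B (x ω - y ω) (z ω) ∂μ = ∫ ω, B (x ω) (z ω) ∂μ - ∫ ω, B (y ω) (z ω) ∂μ := by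
  simpa only [map_sub, sub_apply] using integral_sub hx hy

end Bilinear

section Gordin

variable {Ω E G : Type*} [MeasurableSpace Ω] {μ : Measure Ω}
  [NormedAddCommGroup E] [NormedSpace ℝ E] [NormedAddCommGroup G] [NormedSpace ℝ G]

def IsGordinDecomposition (μ : Measure Ω) (X θ M : ℕ → Ω → E) : Prop :=
  ∀ k, ∀ᵐ ω ∂μ, X k ω = θ k ω - θ (k + 1) ω + (M (k + 1) ω - M k ω)

theorem integral_bilin_eq_of_isGordinDecomposition (B : E →L[ℝ] E →L[ℝ] G)
    {X θ M : ℕ → Ω → E} (hX : IsGordinDecomposition μ X θ M)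
    (hXθ : ∀ j k, Integrable (fun ω => B (X j ω) (θ k ω)) μ)
    (hXX : ∀ j k, Integrable (fun ω => B (X j ω) (X k ω)) μ)
    (hθM : ∀ j k, Integrable (fun ω => B (θ j ω) (M k ω)) μ)
    {j : ℕ} (horth : ∫ ω, B (M (j + 1) ω - M j ω) (M 1 ω - M 0 ω) ∂μ = 0) :
    ∫ ω, B (X j ω) (X 0 ω) ∂μ
      = ∫ ω, B (X j ω) (θ 0 ω) ∂μ - ∫ ω, B (X j ω) (θ 1 ω) ∂μ
        + (∫ ω, B (θ j ω) (M 1 ω - M 0 ω) ∂μ - ∫ ω, B (θ (j + 1) ω) (M 1 ω - M 0 ω) ∂μ) := by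
  have hθΔM : ∀ i, Integrable (fun ω => B (θ i ω) (M 1 ω - M 0 ω)) μ := fun i =>
    (hθM i 1).bilin_sub_right B (hθM i 0)
  have hθ01 := (hXθ j 0).bilin_sub_right B (hXθ j 1)
  have hsplit_right : (fun ω => B (X j ω) (X 0 ω))
      =ᵐ[μ] (fun ω => B (X j ω) (θ 0 ω - θ 1 ω)) + fun ω => B (X j ω) (M 1 ω - M 0 ω) := by
    filter_upwards [hX 0] with ω hω
    simp [hω]
  have hsplit_left : (fun ω => B (X j ω) (M 1 ω - M 0 ω))
      =ᵐ[μ] (fun ω => B (θ j ω - θ (j + 1) ω) (M 1 ω - M 0 ω))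
        + fun ω => B (M (j + 1) ω - M j ω) (M 1 ω - M 0 ω) := by
    filter_upwards [hX j] with ω hω
    simp [hω]
  have hXΔM := (hXX j 0).of_ae_eq_add hsplit_right hθ01
  have hθjj := (hθΔM j).bilin_sub_left B (hθΔM (j + 1))
  rw [integral_congr_ae hsplit_right, integral_add' hθ01 hXΔM, integral_congr_ae hsplit_left,
    integral_add' hθjj (hXΔM.of_ae_eq_add hsplit_left hθjj), horth, add_zero,
    integral_bilin_sub_right B (hXθ j 0) (hXθ j 1), integral_bilin_sub_left B (hθΔM j) (hθΔM (j + 1))]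

end Gordin

theorem stmt12_general {Ω : Type*} [MeasurableSpace Ω] (μ : Measure Ω)
    {E G : Type*} [NormedAddCommGroup E] [NormedSpace ℝ E]
    [NormedAddCommGroup G] [NormedSpace ℝ G]
    (B : E →L[ℝ] E →L[ℝ] G)
    (𝔛 θ 𝔐 : ℕ → Ω → E)
    -- Gordin decomposition
    (hdecomp : ∀ k, ∀ᵐ ω ∂μ, 𝔛 k ω = θ k ω - θ (k+1) ω + (𝔐 (k+1) ω - 𝔐 k ω))
    -- integrability of the relevant products
    (hint1 : ∀ j k, Integrable (fun ω => B (𝔛 j ω) (θ k ω)) μ)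
    (hint2 : ∀ j k, Integrable (fun ω => B (𝔛 j ω) (𝔛 k ω)) μ)
    (hint3 : ∀ j k, Integrable (fun ω => B (θ j ω) (𝔐 k ω)) μ)
    -- stationarity
    (hstat : ∀ j ℓ : ℕ, 1 ≤ j → 1 ≤ ℓ →
      ∫ ω, B (𝔛 j ω) (θ 0 ω - θ 1 ω) ∂μ
        = ∫ ω, B (𝔛 (j+ℓ) ω) (θ ℓ ω - θ (ℓ+1) ω) ∂μ)
    -- orthogonality of martingale increments
    (horth : ∀ j : ℕ, 1 ≤ j →
      ∫ ω, B (𝔐 (j+1) ω - 𝔐 j ω) (𝔐 1 ω - 𝔐 0 ω) ∂μ = 0)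
    -- asymptotics
    (hlim1 : Filter.Tendsto (fun N : ℕ => ∫ ω, B (𝔛 N ω) (θ N ω) ∂μ)
      Filter.atTop (nhds (∫ ω, B (𝔛 0 ω) (θ 0 ω) ∂μ)))
    (hlim2 : Filter.Tendsto
      (fun N : ℕ => ∫ ω, (B (𝔛 N ω) (θ 0 ω) - B (θ (N+1) ω) (𝔐 1 ω - 𝔐 0 ω)) ∂μ)
      Filter.atTop (nhds 0)) :
    Filter.Tendsto (fun N : ℕ => ∑ j ∈ Finset.Icc 1 N, ∫ ω, B (𝔛 j ω) (𝔛 0 ω) ∂μ)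
      Filter.atTop
      (nhds (-(∫ ω, B (𝔛 0 ω) (θ 0 ω) ∂μ)
        + ∫ ω, B (θ 1 ω) (𝔐 1 ω - 𝔐 0 ω) ∂μ)) := by
  have hθΔM : ∀ i, Integrable (fun ω => B (θ i ω) (𝔐 1 ω - 𝔐 0 ω)) μ := fun i =>
    (hint3 i 1).bilin_sub_right B (hint3 i 0)
  refine tendsto_sum_Icc_of_stationary_increments
    (a := fun j k => ∫ ω, B (𝔛 j ω) (θ k ω) ∂μ)
    (c := fun j => ∫ ω, B (θ j ω) (𝔐 1 ω - 𝔐 0 ω) ∂μ)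
    (fun j hj => integral_bilin_eq_of_isGordinDecomposition B hdecomp hint1 hint2 hint3
      (horth j hj)) (fun j ℓ hj hℓ => ?_) hlim1 ?_
  · simpa only [integral_bilin_sub_right B (hint1 _ _) (hint1 _ _)] using hstat j ℓ hj hℓ
  · simpa only [integral_sub (hint1 _ 0) (hθΔM _)] using hlim2

/-- drift identity in the Gordin decomposition:
`Σ_{j≥1} 𝔼[𝔛_j ⋆ 𝔛₀] = −𝔼[𝔛₀ ⋆ θ₀] + 𝔼[θ₁ ⋆ (𝔐₁ − 𝔐₀)]` for a fixed continuous
bilinear operation `⋆ = B`. -/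
theorem stmt12 {Ω : Type*} [MeasurableSpace Ω] (μ : Measure Ω)
    [IsProbabilityMeasure μ]
    {E G : Type*} [NormedAddCommGroup E] [NormedSpace ℝ E] [FiniteDimensional ℝ E]
    [NormedAddCommGroup G] [NormedSpace ℝ G] [FiniteDimensional ℝ G]
    (B : E →L[ℝ] E →L[ℝ] G)
    (𝔛 θ 𝔐 : ℕ → Ω → E)
    -- Gordin decomposition
    (hdecomp : ∀ k, ∀ᵐ ω ∂μ, 𝔛 k ω = θ k ω - θ (k+1) ω + (𝔐 (k+1) ω - 𝔐 k ω))
    -- integrability of the relevant products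
    (hint1 : ∀ j k, Integrable (fun ω => B (𝔛 j ω) (θ k ω)) μ)
    (hint2 : ∀ j k, Integrable (fun ω => B (𝔛 j ω) (𝔛 k ω)) μ)
    (hint3 : ∀ j k, Integrable (fun ω => B (θ j ω) (𝔐 k ω)) μ)
    -- stationarity
    (hstat : ∀ j ℓ : ℕ, 1 ≤ j → 1 ≤ ℓ →
      ∫ ω, B (𝔛 j ω) (θ 0 ω - θ 1 ω) ∂μ
        = ∫ ω, B (𝔛 (j+ℓ) ω) (θ ℓ ω - θ (ℓ+1) ω) ∂μ)
    -- orthogonality of martingale increments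
    (horth : ∀ j : ℕ, 1 ≤ j →
      ∫ ω, B (𝔐 (j+1) ω - 𝔐 j ω) (𝔐 1 ω - 𝔐 0 ω) ∂μ = 0)
    -- asymptotics
    (hlim1 : Filter.Tendsto (fun N : ℕ => ∫ ω, B (𝔛 N ω) (θ N ω) ∂μ)
      Filter.atTop (nhds (∫ ω, B (𝔛 0 ω) (θ 0 ω) ∂μ)))
    (hlim2 : Filter.Tendsto
      (fun N : ℕ => ∫ ω, (B (𝔛 N ω) (θ 0 ω) - B (θ (N+1) ω) (𝔐 1 ω - 𝔐 0 ω)) ∂μ)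
      Filter.atTop (nhds 0)) :
    Filter.Tendsto (fun N : ℕ => ∑ j ∈ Finset.Icc 1 N, ∫ ω, B (𝔛 j ω) (𝔛 0 ω) ∂μ)
      Filter.atTop
      (nhds (-(∫ ω, B (𝔛 0 ω) (θ 0 ω) ∂μ)
        + ∫ ω, B (θ 1 ω) (𝔐 1 ω - 𝔐 0 ω) ∂μ)) :=
  stmt12_general μ B 𝔛 θ 𝔐 hdecomp hint1 hint2 hint3 hstat horth hlim1 hlim2
end

section
/- Let 0 ≤ s ≤ t and let f : ℝ² → ℝ be integrable on the square [s,t]². Then splitting the simplex at an intermediate time u ∈ [s,t] gives ∫∫_{s ≤ u₂ ≤ u₁ ≤ t} f(u₂,u₁) du₂ du₁ = ∫∫_{u ≤ u₂ ≤ u₁ ≤ t} f + ∫∫_{s ≤ u₂ ≤ u ≤ u₁ ≤ t} f + ∫∫_{s ≤ u₂ ≤ u₁ ≤ u} f, and the middle term factorizes as (∫_s^u ∫_u^t f(u₂,u₁) du₁ du₂) when f(u₂,u₁) = g(u₂)h(u₁) is a product: ∫∫_{s ≤ u₂ ≤ u ≤ u₁ ≤ t} g(u₂)h(u₁) du₂du₁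 = (∫_s^u g)(∫_u^t h). -/
open MeasureTheory

/-- splitting the simplex `{s ≤ u₂ ≤ u₁ ≤ t}` at an intermediate
time `u` decomposes the iterated integral into three pieces, and the middle
piece factorizes for product integrands. -/
theorem stmt19 (s u t : ℝ) (hsu : s ≤ u) (hut : u ≤ t)
    (f : ℝ → ℝ → ℝ)
    (hf : IntegrableOn (fun p : ℝ × ℝ => f p.1 p.2)
      (Set.Icc s t ×ˢ Set.Icc s t) volume)
    (g h : ℝ → ℝ)
    (hg : IntervalIntegrable g volume s t)
    (hh : IntervalIntegrable h volume s t) :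
    ((∫ u₁ in s..t, ∫ u₂ in s..u₁, f u₂ u₁)
        = (∫ u₁ in u..t, ∫ u₂ in u..u₁, f u₂ u₁)
          + (∫ u₁ in u..t, ∫ u₂ in s..u, f u₂ u₁)
          + ∫ u₁ in s..u, ∫ u₂ in s..u₁, f u₂ u₁)
    ∧ (∫ u₁ in u..t, ∫ u₂ in s..u, g u₂ * h u₁)
        = (∫ u₂ in s..u, g u₂) * ∫ u₁ in u..t, h u₁ := by
  have hst : s ≤ t := hsu.trans hut
  constructor
  · set μ : Measure ℝ := volume.restrict (Set.Ioc s t) with hμ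
    set μ' : Measure ℝ := volume.restrict (Set.Ioc s u) with hμ'
    have hsub : Set.Ioc s t ⊆ Set.Icc s t := Set.Ioc_subset_Icc_self
    have hsub' : Set.Ioc s u ⊆ Set.Icc s t :=
      (Set.Ioc_subset_Ioc_right hut).trans hsub
    have hprod : Integrable (fun p : ℝ × ℝ => f p.1 p.2) (μ.prod μ) := by
      rw [hμ, Measure.prod_restrict]
      exact hf.mono_set (Set.prod_mono hsub hsub)
    have hprod' : Integrable (fun p : ℝ × ℝ => f p.1 p.2) (μ'.prod μ) := by
      rw [hμ', hμ, Measure.prod_restrict]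
      exact hf.mono_set (Set.prod_mono hsub' hsub)
    set k : ℝ × ℝ → ℝ :=
      Set.indicator {p : ℝ × ℝ | p.1 ≤ p.2} (fun p => f p.1 p.2) with hk_def
    have hk : Integrable k (μ.prod μ) :=
      hprod.indicator (measurableSet_le measurable_fst measurable_snd)
    set F : ℝ → ℝ := fun y => ∫ x in s..y, f x y with hF_def
    set G : ℝ → ℝ := fun y => ∫ x in s..u, f x y with hG_def
    -- a.e. slice integrability
    have hslice : ∀ᵐ y ∂(volume : Measure ℝ), y ∈ Set.Ioc s t →
        IntegrableOn (fun x => f x y) (Set.Ioc s t) volume := by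
      have := hprod.prod_left_ae
      rw [hμ, ae_restrict_iff' measurableSet_Ioc] at this
      exact this
    -- F agrees a.e. with the Fubini integrand
    have hFeq : ∀ y, y ∈ Set.Ioc s t →
        IntegrableOn (fun x => f x y) (Set.Ioc s t) volume →
        F y = ∫ x, k (x, y) ∂μ := by
      intro y hy hint
      have h1 : (fun x => k (x, y))
          = Set.indicator (Set.Iic y) (fun x => f x y) := by
        funext x
        simp [hk_def, Set.indicator_apply]
      rw [hμ, h1, integral_indicator measurableSet_Iic,
        Measure.restrict_restrict measurableSet_Iic]
      have h2 : Set.Iic y ∩ Set.Ioc s t = Set.Ioc s y := by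
        ext x
        simp only [Set.mem_inter_iff, Set.mem_Iic, Set.mem_Ioc]
        exact ⟨fun ⟨h1, h2, _⟩ => ⟨h2, h1⟩,
          fun ⟨h1, h2⟩ => ⟨h2, h1, h2.trans hy.2⟩⟩
      rw [h2]
      exact intervalIntegral.integral_of_le hy.1.le
    have hFae : ∀ᵐ y ∂μ, F y = ∫ x, k (x, y) ∂μ := by
      rw [hμ, ae_restrict_iff' measurableSet_Ioc]
      filter_upwards [hslice] with y hy hy'
      exact hFeq y hy' (hy hy')
    have hFint : IntegrableOn F (Set.Ioc s t) volume :=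
      hk.integral_prod_right.congr (hFae.mono fun y hy => hy.symm)
    have hGint : IntegrableOn G (Set.Ioc s t) volume := by
      have := hprod'.integral_prod_right
      refine this.congr (Filter.Eventually.of_forall fun y => ?_)
      exact (intervalIntegral.integral_of_le hsu).symm
    -- interval integrability of F on subintervals
    have hF_su : IntervalIntegrable F volume s u :=
      (intervalIntegrable_iff_integrableOn_Ioc_of_le hsu).mpr
        (hFint.mono_set (Set.Ioc_subset_Ioc_right hut))
    have hF_ut : IntervalIntegrable F volume u t :=
      (intervalIntegrable_iff_integrableOn_Ioc_of_le hut).mpr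
        (hFint.mono_set (Set.Ioc_subset_Ioc_left hsu))
    have hG_ut : IntervalIntegrable G volume u t :=
      (intervalIntegrable_iff_integrableOn_Ioc_of_le hut).mpr
        (hGint.mono_set (Set.Ioc_subset_Ioc_left hsu))
    -- pointwise a.e. decomposition on Ioc u t
    have hdec : ∀ᵐ y ∂(volume : Measure ℝ), y ∈ Set.Ioc u t →
        F y = (∫ x in u..y, f x y) + G y := by
      filter_upwards [hslice] with y hy hy'
      have hy2 : y ∈ Set.Ioc s t := ⟨hsu.trans_lt hy'.1, hy'.2⟩
      have hint := hy hy2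
      have i1 : IntervalIntegrable (fun x => f x y) volume s u :=
        (intervalIntegrable_iff_integrableOn_Ioc_of_le hsu).mpr
          (hint.mono_set (Set.Ioc_subset_Ioc_right hut))
      have i2 : IntervalIntegrable (fun x => f x y) volume u y :=
        (intervalIntegrable_iff_integrableOn_Ioc_of_le hy'.1.le).mpr
          (hint.mono_set (Set.Ioc_subset_Ioc hsu hy2.2))
      have := intervalIntegral.integral_add_adjacent_intervals i1 i2
      rw [hF_def, hG_def]
      simp only
      linarith [this]
    set T : ℝ → ℝ := fun y => ∫ x in u..y, f x y with hT_def
    have hT_ut : IntervalIntegrable T volume u t := by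
      refine (intervalIntegrable_iff_integrableOn_Ioc_of_le hut).mpr ?_
      have hFG : IntegrableOn (fun y => F y - G y) (Set.Ioc u t) volume :=
        ((hFint.mono_set (Set.Ioc_subset_Ioc_left hsu)).sub
          (hGint.mono_set (Set.Ioc_subset_Ioc_left hsu)))
      have hae : ∀ᵐ y ∂(volume.restrict (Set.Ioc u t)), F y - G y = T y := by
        rw [ae_restrict_iff' measurableSet_Ioc]
        filter_upwards [hdec] with y hy hy'
        have := hy hy'
        rw [hT_def]; simp only; linarith
      exact hFG.congr hae
    have split1 : (∫ y in s..t, F y)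
        = (∫ y in s..u, F y) + ∫ y in u..t, F y :=
      (intervalIntegral.integral_add_adjacent_intervals hF_su hF_ut).symm
    have split2 : (∫ y in u..t, F y)
        = (∫ y in u..t, T y) + ∫ y in u..t, G y := by
      rw [← intervalIntegral.integral_add hT_ut hG_ut]
      apply intervalIntegral.integral_congr_ae
      rw [Set.uIoc_of_le hut]
      filter_upwards [hdec] with y hy hy'
      exact hy hy'
    calc (∫ u₁ in s..t, ∫ u₂ in s..u₁, f u₂ u₁)
        = (∫ y in s..u, F y) + ∫ y in u..t, F y := split1
      _ = (∫ y in u..t, T y) + (∫ y in u..t, G y) + ∫ y in s..u, F y := by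
          rw [split2]; ring
  · calc (∫ u₁ in u..t, ∫ u₂ in s..u, g u₂ * h u₁)
        = ∫ u₁ in u..t, (∫ u₂ in s..u, g u₂) * h u₁ := by
          refine intervalIntegral.integral_congr fun y hy => ?_
          exact intervalIntegral.integral_mul_const (h y) g
      _ = (∫ u₂ in s..u, g u₂) * ∫ u₁ in u..t, h u₁ :=
          intervalIntegral.integral_const_mul _ _
end
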